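/- Let H be a finite weighted constraint language over a finite domain D taking values in ℚ≥0. Let U_D be the set of all unary functions D → ℚ≥0 and let U'_D be the set of all unary functions D → {1,2}. Then the following are equivalent: (1) H ∪ U'_D is balanced; (2) every finite subset of H ∪ U_D is balanced; (3) H ∪ U_D is balanced. -/

import Mathlib

open scoped NNRat

/-- A weight function of some arity over domain `D`, taking values in `ℚ≥0`. -/
abbrev WFun (D : Type) : Type := Σ k : ℕ, (Fin k → D) → ℚ≥0

/-- The binary equality weight function. -/
def EQw (D : Type) [DecidableEq D] : (Fin 2 → D) → ℚ≥0 :=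
  fun x => if x 0 = x 1 then 1 else 0

/-- `F` is definable by a pps-formula over `𝓕 ∪ {EQ}`: a sum over `k` bound
variables of a product of `m` atomic formulas. -/
def InFClone {D : Type} [Fintype D] [DecidableEq D] (𝓕 : Set (WFun D)) {n : ℕ}
    (F : (Fin n → D) → ℚ≥0) : Prop :=
  ∃ (k m : ℕ) (ar : Fin m → ℕ) (G : ∀ j : Fin m, (Fin (ar j) → D) → ℚ≥0)
    (sc : ∀ j : Fin m, Fin (ar j) → Fin (n + k)),
    (∀ j : Fin m, (⟨ar j, G j⟩ : WFun D) ∈ 𝓕 ∨ (⟨ar j, G j⟩ : WFun D) = ⟨2, EQw D⟩) ∧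
    ∀ x : Fin n → D, F x = ∑ y : Fin k → D, ∏ j : Fin m, G j (fun i => Fin.append x y (sc j i))

/-- Weak log-modularity of a weighted constraint language. -/
def WeaklyLogModular {D : Type} [Fintype D] [DecidableEq D] (𝓕 : Set (WFun D)) : Prop :=
  ∀ F : (Fin 2 → D) → ℚ≥0, InFClone 𝓕 F → ∀ a b : D,
    F ![a, a] * F ![b, b] = F ![a, b] * F ![b, a] ∨
    (F ![a, a] = 0 ∧ F ![b, b] = 0) ∨
    (F ![a, b] = 0 ∧ F ![b, a] = 0)

/-- The bipartite adjacency relation of a matrix: a row and a column are adjacent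
iff the corresponding entry is non-zero. -/
def MatAdj {R C α : Type*} [Zero α] (M : R → C → α) : R ⊕ C → R ⊕ C → Prop
  | Sum.inl r, Sum.inr c => M r c ≠ 0
  | Sum.inr c, Sum.inl r => M r c ≠ 0
  | _, _ => False

/-- `M` has block-rank 1: every block (submatrix induced by a connected component
of the bipartite graph of `M`) has rank at most 1, i.e. there is a factorisation
`M r c = u r * v c` valid on every connected row/column pair. -/
def BlockRank1 {R C α : Type*} [Zero α] [Mul α] (M : R → C → α) : Prop :=
  ∃ (u : R → α) (v : C → α), ∀ r c,
    Relation.ReflTransGen (MatAdj M) (Sum.inl r) (Sum.inr c) → M r c = u r * v c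

/-- A weighted constraint language is balanced if, for every function in its
functional clone of arity `n = k + l ≥ 2` (with `k, l ≥ 1`), the associated
`|D|^k × |D|^l` matrix has block-rank 1. -/
def BalancedLang {D : Type} [Fintype D] [DecidableEq D] (𝓕 : Set (WFun D)) : Prop :=
  ∀ (k l : ℕ), 1 ≤ k → 1 ≤ l → ∀ F : (Fin (k + l) → D) → ℚ≥0, InFClone 𝓕 F →
    BlockRank1 (fun (x : Fin k → D) (y : Fin l → D) => F (Fin.append x y))

/-!
Only (1) ⇒ (3) has content. Fix a pps-formula for `F` over `𝓗 ∪ U` and regard the weights of its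
unary atoms as indeterminates `p`; every entry of the matrix of the resulting function `F_p` is a
polynomial in `p`. When all weights are powers of `2`, each unary atom is a product of
`{1, 2}`-valued unary atoms, so `F_p ∈ ⟨𝓗 ∪ U'⟩` and its matrix has block-rank 1; moreover, for
positive weights the support of `F_p` contains that of `F`, so the blocks of `F` lie inside blocks
of `F_p`. Each 2 × 2 minor inside a block of `F` is therefore a polynomial vanishing on an infinite
grid, hence identically, and vanishing of these minors is exactly block-rank 1.
-/
section BlockRank

variable {R C α : Type*}

instance [Zero α] (M : R → C → α) : Std.Symm (MatAdj M) where
  symm a b h := by cases a <;> cases b <;> simp_all [MatAdj]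

lemma reflTransGen_matAdj_mono [Zero α] {M N : R → C → α} (h : ∀ r c, M r c ≠ 0 → N r c ≠ 0)
    {x y : R ⊕ C} (hxy : Relation.ReflTransGen (MatAdj M) x y) :
    Relation.ReflTransGen (MatAdj N) x y := by
  refine Relation.ReflTransGen.mono (fun a b hab => ?_) x y hxy
  cases a <;> cases b <;> simp_all [MatAdj]

lemma BlockRank1.mul_eq_mul [CommSemiring α] {M : R → C → α} (hM : BlockRank1 M) {r r' : R}
    {c c' : C} (h₁ : Relation.ReflTransGen (MatAdj M) (.inl r) (.inr c))
    (h₂ : Relation.ReflTransGen (MatAdj M) (.inl r') (.inr c'))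
    (h₃ : Relation.ReflTransGen (MatAdj M) (.inl r) (.inr c')) :
    M r c * M r' c' = M r c' * M r' c := by
  obtain ⟨u, v, huv⟩ := hM
  have h₄ : Relation.ReflTransGen (MatAdj M) (.inl r') (.inr c) :=
    h₂.trans ((symm h₃).trans h₁)
  rw [huv r c h₁, huv r' c' h₂, huv r c' h₃, huv r' c h₄]
  ring

lemma blockRank1_of_mul_eq_mul [Semifield α] {M : R → C → α}
    (h : ∀ r r' c c', Relation.ReflTransGen (MatAdj M) (.inl r) (.inr c) →
      Relation.ReflTransGen (MatAdj M) (.inl r') (.inr c') →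
      Relation.ReflTransGen (MatAdj M) (.inl r) (.inr c') →
      M r c * M r' c' = M r c' * M r' c) :
    BlockRank1 M := by
  classical
  set conn := Relation.ReflTransGen (MatAdj M)
  obtain ⟨κ, hκ, hκ_eq⟩ : ∃ κ : R ⊕ C → R ⊕ C, (∀ x, conn (κ x) x) ∧
      ∀ x y, conn x y → κ x = κ y := by
    let s : Setoid (R ⊕ C) := ⟨conn, ⟨fun _ => .refl, symm, .trans⟩⟩
    exact ⟨fun x => (Quotient.mk s x).out, Quotient.mk_out, fun x y h => by
      simp only [Quotient.sound (s := s) h]⟩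
  -- `u` and `v` are read off a nonzero entry chosen once per block, via the representative `κ`
  let E : R ⊕ C → Prop := fun t => ∃ q : R × C, conn t (.inl q.1) ∧ M q.1 q.2 ≠ 0
  refine ⟨fun r => if hE : E (κ (.inl r)) then M r hE.choose.2 else 0,
    fun c => if hE : E (κ (.inr c)) then M hE.choose.1 c / M hE.choose.1 hE.choose.2 else 0,
    fun r c hrc => ?_⟩
  obtain ⟨r₁, hr₁⟩ : ∃ r₁, M r₁ c ≠ 0 := by
    rcases hrc.cases_tail with h | ⟨(r₁ | c₁), -, hstep⟩
    · cases h
    · exact ⟨r₁, hstep⟩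
    · cases hstep
  have hE : E (κ (.inl r)) :=
    ⟨(r₁, c), (hκ _).trans (hrc.tail (symm (show MatAdj M (.inl r₁) (.inr c) from hr₁))), hr₁⟩
  beta_reduce
  rw [hκ_eq (.inr c) (.inl r) (symm hrc), dif_pos hE, dif_pos hE]
  obtain ⟨hconn, hne⟩ := hE.choose_spec
  have h₀ : conn (.inl hE.choose.1) (.inr hE.choose.2) := .single hne
  rw [← mul_div_assoc, eq_div_iff hne,
    h r hE.choose.1 c hE.choose.2 hrc h₀ (((symm (hκ _)).trans hconn).trans h₀)]

end BlockRank

theorem blockRank1_of_polynomial_family {σ R C : Type*} {S : Set ℚ≥0} (hS : S.Infinite)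
    (M : (σ → ℚ≥0) → R → C → ℚ≥0) (Q : R → C → MvPolynomial σ ℚ)
    (hQ : ∀ p r c, MvPolynomial.eval (fun i => (p i : ℚ)) (Q r c) = M p r c) {p₀ : σ → ℚ≥0}
    (hS_rank : ∀ p, (∀ i, p i ∈ S) → BlockRank1 (M p))
    (hS_supp : ∀ p, (∀ i, p i ∈ S) → ∀ r c, M p₀ r c ≠ 0 → M p r c ≠ 0) :
    BlockRank1 (M p₀) := by
  refine blockRank1_of_mul_eq_mul fun r r' c c' h₁ h₂ h₃ => ?_
  suffices Q r c * Q r' c' = Q r c' * Q r' c by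
    have := congrArg (MvPolynomial.eval fun i => (p₀ i : ℚ)) this
    simp only [map_mul, hQ] at this
    exact_mod_cast this
  refine MvPolynomial.funext_set (fun _ => (↑) '' S)
    (fun _ => hS.image NNRat.coe_injective.injOn) fun x hx => ?_
  choose p hpS hpx using fun i => hx i trivial
  obtain rfl : (fun i => (p i : ℚ)) = x := funext hpx
  have hsupp := hS_supp p hpS
  simp only [map_mul, hQ]
  exact_mod_cast (hS_rank p hpS).mul_eq_mul (reflTransGen_matAdj_mono hsupp h₁)
    (reflTransGen_matAdj_mono hsupp h₂) (reflTransGen_matAdj_mono hsupp h₃)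

section Clone

variable {D : Type} [Fintype D] [DecidableEq D]

lemma InFClone.mono {𝓕 𝓖 : Set (WFun D)} (h : 𝓕 ⊆ 𝓖) {n : ℕ} {F : (Fin n → D) → ℚ≥0}
    (hF : InFClone 𝓕 F) : InFClone 𝓖 F := by
  obtain ⟨k, m, ar, G, sc, hmem, hF⟩ := hF
  exact ⟨k, m, ar, G, sc, fun j => (hmem j).imp_left (@h _), hF⟩

lemma BalancedLang.anti {𝓕 𝓖 : Set (WFun D)} (h : 𝓖 ⊆ 𝓕) (hb : BalancedLang 𝓕) :
    BalancedLang 𝓖 :=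
  fun k l hk hl F hF => hb k l hk hl F (hF.mono h)

lemma balancedLang_of_forall_finite {𝓕 : Set (WFun D)}
    (h : ∀ 𝓖 ⊆ 𝓕, 𝓖.Finite → BalancedLang 𝓖) : BalancedLang 𝓕 := by
  intro k l hk hl F ⟨b, m, ar, G, sc, hmem, hF⟩
  refine h (𝓕 ∩ Set.range fun j => ⟨ar j, G j⟩) Set.inter_subset_left
    ((Set.finite_range _).inter_of_right 𝓕) k l hk hl F ⟨b, m, ar, G, sc, fun j => ?_, hF⟩
  exact (hmem j).imp_left fun hj => ⟨hj, j, rfl⟩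

end Clone

section UnaryLang

variable (D : Type)

def unaryLang : Set (WFun D) := {G | ∃ u : D → ℚ≥0, G = ⟨1, fun x => u (x 0)⟩}

def unaryLangOneTwo : Set (WFun D) :=
  {G | ∃ u : D → ℚ≥0, (∀ d, u d = 1 ∨ u d = 2) ∧ G = ⟨1, fun x => u (x 0)⟩}

variable {D}

lemma unaryLangOneTwo_subset : unaryLangOneTwo D ⊆ unaryLang D :=
  fun _ ⟨u, _, hG⟩ => ⟨u, hG⟩

lemma unaryLangOneTwo_finite [Finite D] : (unaryLangOneTwo D).Finite := by
  have hpi : {u : D → ℚ≥0 | ∀ d, u d = 1 ∨ u d = 2}.Finite :=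
    (Set.Finite.pi fun _ => (Set.toFinite {1, 2})).subset fun u hu d _ => hu d
  refine (hpi.image fun u => (⟨1, fun x => u (x 0)⟩ : WFun D)).subset ?_
  rintro _ ⟨u, hu, rfl⟩
  exact ⟨u, hu, rfl⟩

end UnaryLang

section AtomicProduct

variable {D : Type} [DecidableEq D]

def IsAtomicProduct (𝓕 : Set (WFun D)) {N : ℕ} (P : (Fin N → D) → ℚ≥0) : Prop :=
  ∃ (ι : Type) (_ : Fintype ι) (σ : ι → WFun D) (sc : ∀ j, Fin (σ j).1 → Fin N),
    (∀ j, σ j ∈ 𝓕 ∨ σ j = ⟨2, EQw D⟩) ∧ ∀ v, P v = ∏ j, (σ j).2 (v ∘ sc j)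

variable {𝓕 : Set (WFun D)} {N : ℕ}

lemma isAtomicProduct_atom {σ : WFun D} (hσ : σ ∈ 𝓕 ∨ σ = ⟨2, EQw D⟩) (sc : Fin σ.1 → Fin N) :
    IsAtomicProduct 𝓕 fun v => σ.2 (v ∘ sc) :=
  ⟨Unit, inferInstance, fun _ => σ, fun _ => sc, fun _ => hσ, fun v => by simp⟩

lemma IsAtomicProduct.mono {𝓖 : Set (WFun D)} (h : 𝓕 ⊆ 𝓖) {P : (Fin N → D) → ℚ≥0}
    (hP : IsAtomicProduct 𝓕 P) : IsAtomicProduct 𝓖 P := by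
  obtain ⟨ι, _, σ, sc, hσ, hP⟩ := hP
  exact ⟨ι, inferInstance, σ, sc, fun j => (hσ j).imp_left (@h _), hP⟩

lemma IsAtomicProduct.prod {κ : Type} [Fintype κ] {P : κ → (Fin N → D) → ℚ≥0}
    (hP : ∀ i, IsAtomicProduct 𝓕 (P i)) : IsAtomicProduct 𝓕 fun v => ∏ i, P i v := by
  choose ι hι σ sc hσ hP using hP
  exact ⟨Σ i, ι i, inferInstance, fun q => σ q.1 q.2, fun q => sc q.1 q.2, fun q => hσ q.1 q.2,
    fun v => by simp only [hP, Fintype.prod_sigma]⟩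

lemma IsAtomicProduct.inFClone_sum [Fintype D] {n k : ℕ} {P : (Fin (n + k) → D) → ℚ≥0}
    (hP : IsAtomicProduct 𝓕 P) : InFClone 𝓕 fun x => ∑ y : Fin k → D, P (Fin.append x y) := by
  obtain ⟨ι, _, σ, sc, hσ, hP⟩ := hP
  let e := (Fintype.equivFin ι).symm
  refine ⟨k, Fintype.card ι, fun t => (σ (e t)).1, fun t => (σ (e t)).2, fun t => sc (e t),
    fun t => hσ (e t), fun x => ?_⟩
  simp only [hP]
  exact Finset.sum_congr rfl fun y _ => (e.prod_comp fun j => (σ j).2 (Fin.append x y ∘ sc j)).symm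

lemma isAtomicProduct_two_pow [Fintype D] (hU : unaryLangOneTwo D ⊆ 𝓕) (e : D → ℕ) (i : Fin N) :
    IsAtomicProduct 𝓕 fun v => 2 ^ e (v i) := by
  have hpow : ∀ d, (2 : ℚ≥0) ^ e d = ∏ s : Fin (Finset.univ.sup e), if s < e d then 2 else 1 := by
    intro d
    rw [Finset.prod_ite, Finset.prod_const_one, mul_one, Finset.prod_const, Fin.card_filter_val_lt,
      min_eq_right (Finset.le_sup (Finset.mem_univ d))]
  simp only [hpow]
  refine IsAtomicProduct.prod fun s => isAtomicProduct_atom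
    (σ := ⟨1, fun x => if s < e (x 0) then 2 else 1⟩) (Or.inl (hU ?_)) fun _ => i
  exact ⟨fun d => if s < e d then 2 else 1, fun d => by dsimp only; split_ifs <;> simp, rfl⟩

end AtomicProduct

section ParamProd

variable {D : Type} {N m : ℕ}

/-- A product of atoms in which `a j = .inl g` is a fixed factor `g`, while `a j = .inr i` is a
unary factor on the variable `i` whose weights `p (j, ·)` are treated as parameters. -/
def paramProd (a : Fin m → ((Fin N → D) → ℚ≥0) ⊕ Fin N) (p : Fin m × D → ℚ≥0)
    (v : Fin N → D) : ℚ≥0 :=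
  ∏ j, (a j).elim (· v) fun i => p (j, v i)

noncomputable def paramPoly (a : Fin m → ((Fin N → D) → ℚ≥0) ⊕ Fin N) (v : Fin N → D) :
    MvPolynomial (Fin m × D) ℚ :=
  ∏ j, (a j).elim (fun g => MvPolynomial.C (g v : ℚ)) fun i => MvPolynomial.X (j, v i)

variable (a : Fin m → ((Fin N → D) → ℚ≥0) ⊕ Fin N)

lemma eval_paramPoly (p : Fin m × D → ℚ≥0) (v : Fin N → D) :
    MvPolynomial.eval (fun q => (p q : ℚ)) (paramPoly a v) = paramProd a p v := by
  simp only [paramPoly, paramProd, map_prod]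
  push_cast
  refine Finset.prod_congr rfl fun j _ => ?_
  cases a j <;> simp

lemma paramProd_ne_zero {p p' : Fin m × D → ℚ≥0} (hp' : ∀ q, p' q ≠ 0) {v : Fin N → D}
    (hv : paramProd a p v ≠ 0) : paramProd a p' v ≠ 0 := by
  simp only [paramProd, Finset.prod_ne_zero_iff, Finset.mem_univ, true_implies] at hv ⊢
  intro j
  have hj := hv j
  rcases h : a j with g | i <;> simp only [h, Sum.elim_inl, Sum.elim_inr] at hj ⊢
  exacts [hj, hp' _]

lemma isAtomicProduct_paramProd_two_pow [Fintype D] [DecidableEq D] {𝓕 : Set (WFun D)}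
    (ha : ∀ j g, a j = .inl g → IsAtomicProduct 𝓕 g) (hU : unaryLangOneTwo D ⊆ 𝓕)
    (e : Fin m × D → ℕ) : IsAtomicProduct 𝓕 (paramProd a fun q => 2 ^ e q) := by
  refine IsAtomicProduct.prod fun j => ?_
  rcases h : a j with g | i
  · simpa only [h, Sum.elim_inl] using ha j g h
  · simpa only [Sum.elim_inr] using isAtomicProduct_two_pow hU (fun d => e (j, d)) i

end ParamProd

section UnaryWeightsAsParameters

variable {D : Type} [DecidableEq D] {𝓗 : Set (WFun D)}

lemma exists_paramAtom {N : ℕ} {σ : WFun D} (hσ : σ ∈ 𝓗 ∪ unaryLang D ∨ σ = ⟨2, EQw D⟩)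
    (sc : Fin σ.1 → Fin N) :
    ∃ (c : ((Fin N → D) → ℚ≥0) ⊕ Fin N) (u : D → ℚ≥0),
      (∀ g, c = .inl g → IsAtomicProduct 𝓗 g) ∧
      ∀ v, σ.2 (v ∘ sc) = c.elim (· v) fun i => u (v i) := by
  rcases hσ with (hσ | ⟨u, rfl⟩) | hσ
  · exact ⟨.inl _, 1, fun g hg => Sum.inl_injective hg ▸ isAtomicProduct_atom (.inl hσ) sc,
      fun _ => rfl⟩
  · exact ⟨.inr (sc 0), u, fun _ hg => Sum.inr_ne_inl hg |>.elim, fun _ => rfl⟩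
  · exact ⟨.inl _, 1, fun g hg => Sum.inl_injective hg ▸ isAtomicProduct_atom (.inr hσ) sc,
      fun _ => rfl⟩

variable [Fintype D]

lemma InFClone.exists_paramProd {n : ℕ} {F : (Fin n → D) → ℚ≥0}
    (hF : InFClone (𝓗 ∪ unaryLang D) F) :
    ∃ (b m : ℕ) (a : Fin m → ((Fin (n + b) → D) → ℚ≥0) ⊕ Fin (n + b)) (p₀ : Fin m × D → ℚ≥0),
      (∀ j g, a j = .inl g → IsAtomicProduct 𝓗 g) ∧
      ∀ x, F x = ∑ y : Fin b → D, paramProd a p₀ (Fin.append x y) := by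
  obtain ⟨b, m, ar, G, sc, hmem, hF⟩ := hF
  choose a u ha hu using fun j => exists_paramAtom (σ := ⟨ar j, G j⟩) (hmem j) (sc j)
  exact ⟨b, m, a, fun q => u q.1 q.2, ha, fun x => by simp only [hF, paramProd, ← hu]; rfl⟩

theorem BalancedLang.union_unaryLang (h : BalancedLang (𝓗 ∪ unaryLangOneTwo D)) :
    BalancedLang (𝓗 ∪ unaryLang D) := by
  intro k l hk hl F hF
  obtain ⟨b, m, a, p₀, ha, hF⟩ := hF.exists_paramProd
  simp only [hF]
  have hS : (Set.range fun e : ℕ => (2 : ℚ≥0) ^ e).Infinite :=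
    Set.infinite_range_of_injective (pow_right_injective₀ two_pos (by norm_num))
  refine blockRank1_of_polynomial_family hS
    (fun p x y => ∑ z : Fin b → D, paramProd a p (Fin.append (Fin.append x y) z))
    (fun x y => ∑ z : Fin b → D, paramPoly a (Fin.append (Fin.append x y) z))
    (fun p x y => by push_cast; simp only [map_sum, eval_paramPoly]) ?_ ?_
  · intro p hp
    choose e he using hp
    obtain rfl : (fun q => 2 ^ e q) = p := funext he
    exact h k l hk hl _ (isAtomicProduct_paramProd_two_pow a
      (fun j g hj => (ha j g hj).mono Set.subset_union_left) Set.subset_union_right e).inFClone_sum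
  · intro p hp x y hxy
    have hpos : ∀ q, p q ≠ 0 := fun q => (hp q).choose_spec ▸ pow_ne_zero _ two_ne_zero
    obtain ⟨z, -, hz⟩ := Finset.exists_ne_zero_of_sum_ne_zero hxy
    exact fun h0 => paramProd_ne_zero a hpos hz (Finset.sum_eq_zero_iff.mp h0 z (Finset.mem_univ _))

end UnaryWeightsAsParameters

theorem balanced_unary_equiv_general
    {D : Type} [Fintype D] [DecidableEq D]
    (𝓗 : Set (WFun D)) (hfin : 𝓗.Finite) :
    (BalancedLang (𝓗 ∪ {G : WFun D | ∃ u : D → ℚ≥0, (∀ d, u d = 1 ∨ u d = 2) ∧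
        G = ⟨1, fun x => u (x 0)⟩}) ↔
      ∀ 𝓖 ⊆ 𝓗 ∪ {G : WFun D | ∃ u : D → ℚ≥0, G = ⟨1, fun x => u (x 0)⟩},
        𝓖.Finite → BalancedLang 𝓖) ∧
    ((∀ 𝓖 ⊆ 𝓗 ∪ {G : WFun D | ∃ u : D → ℚ≥0, G = ⟨1, fun x => u (x 0)⟩},
        𝓖.Finite → BalancedLang 𝓖) ↔
      BalancedLang (𝓗 ∪ {G : WFun D | ∃ u : D → ℚ≥0, G = ⟨1, fun x => u (x 0)⟩})) := by
  have h31 : BalancedLang (𝓗 ∪ unaryLang D) →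
      ∀ 𝓖 ⊆ 𝓗 ∪ unaryLang D, 𝓖.Finite → BalancedLang 𝓖 :=
    fun h 𝓖 h𝓖 _ => h.anti h𝓖
  exact ⟨⟨fun h => h31 h.union_unaryLang,
      fun h => h _ (Set.union_subset_union_right 𝓗 unaryLangOneTwo_subset)
        (hfin.union unaryLangOneTwo_finite)⟩,
    ⟨balancedLang_of_forall_finite, h31⟩⟩

/-- For a finite weighted constraint language `𝓗`, with `U`
the set of all unary weight functions and `U'` the set of unary functions
taking values in `{1, 2}`, the following are equivalent:
(1) `𝓗 ∪ U'` is balanced; (2) every finite subset of `𝓗 ∪ U` is balanced;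
(3) `𝓗 ∪ U` is balanced. -/
theorem balanced_unary_equiv
    {D : Type} [Fintype D] [DecidableEq D] (hD : 2 ≤ Fintype.card D)
    (𝓗 : Set (WFun D)) (hfin : 𝓗.Finite) :
    (BalancedLang (𝓗 ∪ {G : WFun D | ∃ u : D → ℚ≥0, (∀ d, u d = 1 ∨ u d = 2) ∧
        G = ⟨1, fun x => u (x 0)⟩}) ↔
      ∀ 𝓖 ⊆ 𝓗 ∪ {G : WFun D | ∃ u : D → ℚ≥0, G = ⟨1, fun x => u (x 0)⟩},
        𝓖.Finite → BalancedLang 𝓖) ∧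
    ((∀ 𝓖 ⊆ 𝓗 ∪ {G : WFun D | ∃ u : D → ℚ≥0, G = ⟨1, fun x => u (x 0)⟩},
        𝓖.Finite → BalancedLang 𝓖) ↔
      BalancedLang (𝓗 ∪ {G : WFun D | ∃ u : D → ℚ≥0, G = ⟨1, fun x => u (x 0)⟩})) :=
  balanced_unary_equiv_general 𝓗 hfin
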